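/- arXiv:2212.04534 — 4 statements merged into one kernel-verified Lean document; each statement's English description precedes it below -/
import Mathlib

section
/- Let D ⊆ ℝⁿ be nonempty, and let B, C : ℝⁿ → ℝ with C(x) > 0 for all x ∈ D. A point x* ∈ D maximizes the ratio B(x)/C(x) over D with optimal value q* if and only if x* maximizes B(x) − q*·C(x) over D and the maximum value of B(x) − q*·C(x) over D equals 0. -/
/-- Dinkelbach's fundamental equivalence: `x⋆ ∈ D` maximizes the ratio `B/C` over `D`
with optimal value `q⋆` iff `x⋆` maximizes `B - q⋆·C` over `D` with maximum value `0`. -/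
theorem dinkelbach_equivalence {n : ℕ} (D : Set (Fin n → ℝ)) (hD : D.Nonempty)
    (B C : (Fin n → ℝ) → ℝ) (hC : ∀ x ∈ D, 0 < C x)
    (xstar : Fin n → ℝ) (hx : xstar ∈ D) (qstar : ℝ) :
    (qstar = B xstar / C xstar ∧ ∀ x ∈ D, B x / C x ≤ qstar) ↔
      ((∀ x ∈ D, B x - qstar * C x ≤ B xstar - qstar * C xstar) ∧
        B xstar - qstar * C xstar = 0) := by
  have hCx := hC xstar hx
  constructor
  · rintro ⟨hq, hmax⟩
    have h0 : B xstar - qstar * C xstar = 0 := by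
      rw [hq]; field_simp; ring
    refine ⟨fun x hxD => ?_, h0⟩
    have := hmax x hxD
    rw [h0]
    have hCxx := hC x hxD
    rw [div_le_iff₀ hCxx] at this
    linarith
  · rintro ⟨hmax, h0⟩
    have hq : qstar = B xstar / C xstar := by
      field_simp
      linarith
    refine ⟨hq, fun x hxD => ?_⟩
    have := hmax x hxD
    rw [h0] at this
    have hCxx := hC x hxD
    rw [div_le_iff₀ hCxx]
    linarith
end

section
/- Let D ⊆ ℝⁿ be a nonempty compact set and B, C continuous with C > 0 on D, and let q* = max_{x∈D} B(x)/C(x). Then F(q) = max_{x∈D}(B(x) − q·C(x)) satisfies: F(q) > 0 if q < q*, F(q*) = 0, and F(q) < 0 if q > q*. -/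
/-- Sign characterization of the Dinkelbach parametric function: with
`q⋆ = max_{x∈D} B x / C x`, we have `F q > 0` for `q < q⋆`, `F q⋆ = 0`, and
`F q < 0` for `q > q⋆`. -/
theorem dinkelbach_F_sign {n : ℕ} (D : Set (Fin n → ℝ)) (hD : D.Nonempty)
    (hDc : IsCompact D) (B C : (Fin n → ℝ) → ℝ)
    (hB : Continuous B) (hCc : Continuous C) (hC : ∀ x ∈ D, 0 < C x)
    (qstar : ℝ) (hq : IsGreatest ((fun x => B x / C x) '' D) qstar)
    (F : ℝ → ℝ) (hF : ∀ q, IsGreatest ((fun x => B x - q * C x) '' D) (F q)) :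
    (∀ q < qstar, 0 < F q) ∧ F qstar = 0 ∧ (∀ q > qstar, F q < 0) := by
  obtain ⟨⟨xs, hxs, hxsq⟩, hub⟩ := hq
  have hCxs : 0 < C xs := hC xs hxs
  have hBxs : B xs = qstar * C xs := by
    field_simp at hxsq; linarith [hxsq]
  have hle : ∀ x ∈ D, B x ≤ qstar * C x := by
    intro x hx
    have h := hub ⟨x, hx, rfl⟩
    have hCx := hC x hx
    rw [div_le_iff₀ hCx] at h
    linarith
  refine ⟨?_, ?_, ?_⟩
  · intro q hq'
    have h := (hF q).1
    have hmem := h  -- F q is upper bound too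
    have hge : B xs - q * C xs ≤ F q := (hF q).2 ⟨xs, hxs, rfl⟩
    have : 0 < B xs - q * C xs := by
      rw [hBxs]; nlinarith
    linarith
  · obtain ⟨⟨x0, hx0, hx0e⟩, hub'⟩ := hF qstar
    have h1 : F qstar ≤ 0 := by
      simp only at hx0e; have := hle x0 hx0; linarith
    have h2 : 0 ≤ F qstar := by
      have := hub' ⟨xs, hxs, rfl⟩; simp only at this; linarith
    linarith
  · intro q hq'
    obtain ⟨⟨x0, hx0, hx0e⟩, hub'⟩ := hF q
    have h1 := hle x0 hx0
    have hCx0 := hC x0 hx0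
    simp only at hx0e
    nlinarith
end

section
/- Let D ⊆ ℝⁿ be nonempty compact, B, C continuous with C > 0 on D, and q* the optimal ratio. In Newton's (Dinkelbach's) iteration, if x_k maximizes B(x) − q_k·C(x) over D and F(q_k) > 0, then q_{k+1} := B(x_k)/C(x_k) satisfies q_k < q_{k+1} ≤ q*. -/
/-- One step of Newton's (Dinkelbach's) method: if `x_k` maximizes `B - q_k·C` over `D`
and `F(q_k) = B x_k - q_k · C x_k > 0`, then the update `q_{k+1} = B x_k / C x_k`
satisfies `q_k < q_{k+1} ≤ q⋆`, where `q⋆` is the optimal ratio. -/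
theorem dinkelbach_step_increase {n : ℕ} (D : Set (Fin n → ℝ)) (hD : D.Nonempty)
    (hDc : IsCompact D) (B C : (Fin n → ℝ) → ℝ)
    (hB : Continuous B) (hCc : Continuous C) (hC : ∀ x ∈ D, 0 < C x)
    (qstar : ℝ) (hq : IsGreatest ((fun x => B x / C x) '' D) qstar)
    (qk : ℝ) (xk : Fin n → ℝ) (hxk : xk ∈ D)
    (hmax : ∀ x ∈ D, B x - qk * C x ≤ B xk - qk * C xk)
    (hpos : 0 < B xk - qk * C xk) :
    qk < B xk / C xk ∧ B xk / C xk ≤ qstar := by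
  have hCx := hC xk hxk
  constructor
  · rw [lt_div_iff₀ hCx]; linarith
  · exact hq.2 ⟨xk, hxk, rfl⟩
end

section
/- Let D ⊆ ℝⁿ be nonempty compact, B, C continuous with C > 0 on D, and q* the optimal ratio. The sequence of Newton's method iterates q_k (with q_{k+1} = B(x_k)/C(x_k) where x_k maximizes B(x) − q_k·C(x)) converges to q*. -/
/-- Convergence of Dinkelbach's (Newton's) iterates: if at each step `x k ∈ D` maximizes
`B - q k · C` over `D` and `q (k+1) = B (x k) / C (x k)`, then `q k → q⋆`, the optimal
ratio. -/
theorem dinkelbach_convergence {n : ℕ} (D : Set (Fin n → ℝ)) (hD : D.Nonempty)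
    (hDc : IsCompact D) (B C : (Fin n → ℝ) → ℝ)
    (hB : Continuous B) (hCc : Continuous C) (hC : ∀ x ∈ D, 0 < C x)
    (qstar : ℝ) (hq : IsGreatest ((fun x => B x / C x) '' D) qstar)
    (q : ℕ → ℝ) (x : ℕ → (Fin n → ℝ))
    (hx : ∀ k, x k ∈ D)
    (hmax : ∀ k, ∀ y ∈ D, B y - q k * C y ≤ B (x k) - q k * C (x k))
    (hupd : ∀ k, q (k + 1) = B (x k) / C (x k)) :
    Filter.Tendsto q Filter.atTop (nhds qstar) := by
  obtain ⟨xs, hxsD, hxsq⟩ := hq.1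
  have hcs : 0 < C xs := hC xs hxsD
  rw [div_eq_iff hcs.ne'] at hxsq
  obtain ⟨M, hM⟩ := (hDc.image hCc).bddAbove
  have hMle : ∀ y ∈ D, C y ≤ M := fun y hy => hM ⟨y, hy, rfl⟩
  have hqle : ∀ k, q (k + 1) ≤ qstar := by
    intro k; rw [hupd k]; exact hq.2 ⟨x k, hx k, rfl⟩
  have hBx : ∀ k, B (x k) = q (k + 1) * C (x k) := by
    intro k
    have hc := hC (x k) (hx k)
    rw [hupd k, div_mul_cancel₀ _ hc.ne']
  have key : ∀ k, (qstar - q (k + 1)) * C xs ≤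
      (q (k + 2) - q (k + 1)) * C (x (k + 1)) := by
    intro k
    have h := hmax (k + 1) xs hxsD
    have h2 := hBx (k + 1)
    nlinarith [h, h2, hxsq]
  have hmono : ∀ k, q (k + 1) ≤ q (k + 2) := by
    intro k
    have h := key k
    have h1 : 0 ≤ (qstar - q (k + 1)) * C xs :=
      mul_nonneg (by linarith [hqle k]) hcs.le
    have h2 : 0 < C (x (k + 1)) := hC _ (hx _)
    nlinarith
  have hrmono : Monotone (fun k => q (k + 1)) := monotone_nat_of_le_succ hmono
  have hrbdd : BddAbove (Set.range (fun k => q (k + 1))) :=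
    ⟨qstar, by rintro _ ⟨k, rfl⟩; exact hqle k⟩
  set L := ⨆ k, q (k + 1) with hL
  have hrL : Filter.Tendsto (fun k => q (k + 1)) Filter.atTop (nhds L) :=
    tendsto_atTop_ciSup hrmono hrbdd
  have hLq : L ≤ qstar := le_of_tendsto' hrL hqle
  have key2 : ∀ k, (qstar - q (k + 1)) * C xs ≤ (q (k + 2) - q (k + 1)) * M := by
    intro k
    refine (key k).trans ?_
    have h2 := hC (x (k + 1)) (hx _)
    have h3 := hMle (x (k + 1)) (hx _)
    nlinarith [hmono k]
  have hqL : qstar ≤ L := by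
    have t1 : Filter.Tendsto (fun k => (qstar - q (k + 1)) * C xs) Filter.atTop
        (nhds ((qstar - L) * C xs)) :=
      (tendsto_const_nhds.sub hrL).mul tendsto_const_nhds
    have t2 : Filter.Tendsto (fun k => (q (k + 2) - q (k + 1)) * M) Filter.atTop
        (nhds ((L - L) * M)) := by
      have : Filter.Tendsto (fun k => q (k + 2)) Filter.atTop (nhds L) :=
        hrL.comp (Filter.tendsto_add_atTop_nat 1)
      exact (this.sub hrL).mul tendsto_const_nhds
    have h := le_of_tendsto_of_tendsto' t1 t2 key2
    nlinarith
  have hLeq : L = qstar := le_antisymm hLq hqL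
  rw [← hLeq]
  exact (Filter.tendsto_add_atTop_iff_nat 1).mp hrL
end
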